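/- arXiv:0802.0447 — 8 statements merged into one kernel-verified Lean document; each statement's English description precedes it below -/
import Mathlib

section
/- Let u be a d×d complex unitary matrix and suppose V is a nonzero D×D complex matrix and λ ∈ ℂ satisfy E_u(V) = λ·V. Then |λ| ≤ 1. (In particular, every eigenvalue of the linear map E_u on D×D matrices has modulus at most 1, so its spectral radius is at most 1.) -/
/-!
Put `B_m = ∑_n u_{mn} A_n`, so that `E_u(V) = ∑_m B_m V A_mᴴ`, and pair families of matrices by
the positive semidefinite Hermitian form `⟨P, Q⟩_Λ = ∑_m tr(P_mᴴ Λ Q_m)`. With `t = tr(Vᴴ Λ V)`,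
`⟨(V A_m), (B_m V)⟩_Λ = λ t`, while `⟨(V A_m), (V A_m)⟩_Λ = t` by unitality and
`⟨(B_m V), (B_m V)⟩_Λ = t` because `∑_m B_mᴴ Λ B_m = ∑_n A_nᴴ Λ A_n = Λ` for unitary `u`.
Cauchy–Schwarz gives `|λ| t ≤ t`, and `t > 0` since `Λ` is positive definite and `V ≠ 0`.
-/

open Matrix Complex
open scoped ComplexOrder

/-- The map `E_O(X) = ∑_{n,n'} O_{n',n} · A_n X (A_{n'})ᴴ`. -/
noncomputable def EO {d D : ℕ} (A : Fin d → Matrix (Fin D) (Fin D) ℂ)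
    (O : Matrix (Fin d) (Fin d) ℂ) (X : Matrix (Fin D) (Fin D) ℂ) :
    Matrix (Fin D) (Fin D) ℂ :=
  ∑ n : Fin d, ∑ n' : Fin d, O n' n • (A n * X * (A n')ᴴ)

namespace Matrix

section KrausMix

variable {R ι n : Type*} [CommRing R] [StarRing R] [Fintype ι]

def krausMix (u : Matrix ι ι R) (A : ι → Matrix n n R) (m : ι) : Matrix n n R :=
  ∑ k, u m k • A k

lemma sum_conjTranspose_krausMix_mul_mul [DecidableEq ι] [Fintype n] {u : Matrix ι ι R}
    (hu : u ∈ unitaryGroup ι R) (A : ι → Matrix n n R) (Λ : Matrix n n R) :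
    ∑ m, (krausMix u A m)ᴴ * Λ * krausMix u A m = ∑ k, (A k)ᴴ * Λ * A k :=
  calc ∑ m, (krausMix u A m)ᴴ * Λ * krausMix u A m
      = ∑ k, ∑ l, (star u * u) k l • ((A k)ᴴ * Λ * A l) := by
        simp only [krausMix, conjTranspose_sum, conjTranspose_smul, Finset.sum_mul,
          Finset.mul_sum, smul_mul_assoc, Matrix.mul_smul, smul_smul, mul_apply, star_apply,
          Finset.sum_smul]
        rw [Finset.sum_comm]
        refine (Finset.sum_congr rfl fun l _ => Finset.sum_comm).trans ?_
        rw [Finset.sum_comm]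
    _ = ∑ k, (A k)ᴴ * Λ * A k := by
        simp [mem_unitaryGroup_iff'.mp hu, one_apply, ite_smul]

end KrausMix

section WeightedTraceInner

variable {𝕜 ι n : Type*} [RCLike 𝕜] [Fintype ι] [Fintype n]

def weightedTraceInner (Λ : Matrix n n 𝕜) (P Q : ι → Matrix n n 𝕜) : 𝕜 :=
  ∑ i, ((P i)ᴴ * Λ * Q i).trace

lemma weightedTraceInner_self_nonneg {Λ : Matrix n n 𝕜} (hΛ : Λ.PosSemidef)
    (P : ι → Matrix n n 𝕜) : 0 ≤ weightedTraceInner Λ P P :=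
  Finset.sum_nonneg fun i _ => (hΛ.conjTranspose_mul_mul_same (P i)).trace_nonneg

abbrev weightedTraceInnerCore {Λ : Matrix n n 𝕜} (hΛ : Λ.PosSemidef) :
    PreInnerProductSpace.Core 𝕜 (ι → Matrix n n 𝕜) where
  inner := weightedTraceInner Λ
  conj_inner_symm P Q := by
    simp only [weightedTraceInner, map_sum]
    refine Finset.sum_congr rfl fun i _ => ?_
    rw [← RCLike.star_def, ← trace_conjTranspose]
    simp [hΛ.isHermitian.eq, Matrix.mul_assoc]
  re_inner_nonneg P := (RCLike.nonneg_iff.mp (weightedTraceInner_self_nonneg hΛ P)).1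
  add_left P Q R := by
    simp [weightedTraceInner, Matrix.add_mul, Finset.sum_add_distrib]
  smul_left P Q r := by
    simp [weightedTraceInner, Finset.mul_sum]

lemma norm_weightedTraceInner_sq_le {Λ : Matrix n n 𝕜} (hΛ : Λ.PosSemidef)
    (P Q : ι → Matrix n n 𝕜) :
    ‖weightedTraceInner Λ P Q‖ ^ 2 ≤
      ‖weightedTraceInner Λ P P‖ * ‖weightedTraceInner Λ Q Q‖ := by
  let := weightedTraceInnerCore (ι := ι) hΛ
  have hCS := InnerProductSpace.Core.inner_mul_inner_self_le (𝕜 := 𝕜) P Q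
  rw [InnerProductSpace.Core.norm_inner_symm Q P, ← sq] at hCS
  have re_eq_norm (R : ι → Matrix n n 𝕜) :
      RCLike.re (weightedTraceInner Λ R R) = ‖weightedTraceInner Λ R R‖ := by
    simpa using
      (congrArg RCLike.re (RCLike.norm_of_nonneg' (weightedTraceInner_self_nonneg hΛ R))).symm
  rwa [← re_eq_norm, ← re_eq_norm]

lemma weightedTraceInner_mul_right (Λ X Y : Matrix n n 𝕜) (A : ι → Matrix n n 𝕜) :
    weightedTraceInner Λ (fun i => X * A i) (fun i => Y * A i) =
      (Xᴴ * Λ * Y * ∑ i, A i * (A i)ᴴ).trace := by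
  simp only [weightedTraceInner, Matrix.mul_sum, trace_sum, conjTranspose_mul,
    Matrix.mul_assoc]
  refine Finset.sum_congr rfl fun i _ => ?_
  rw [trace_mul_comm]
  simp only [Matrix.mul_assoc]

lemma weightedTraceInner_mul_left (Λ X Y : Matrix n n 𝕜) (B : ι → Matrix n n 𝕜) :
    weightedTraceInner Λ (fun i => B i * X) (fun i => B i * Y) =
      (Xᴴ * (∑ i, (B i)ᴴ * Λ * B i) * Y).trace := by
  simp only [weightedTraceInner, Matrix.mul_sum, Matrix.sum_mul, trace_sum, conjTranspose_mul]
  simp only [Matrix.mul_assoc]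

lemma weightedTraceInner_mul_right_mul_left (Λ X Y : Matrix n n 𝕜) (A B : ι → Matrix n n 𝕜) :
    weightedTraceInner Λ (fun i => X * A i) (fun i => B i * Y) =
      (Xᴴ * Λ * ∑ i, B i * Y * (A i)ᴴ).trace := by
  simp only [weightedTraceInner, Matrix.mul_sum, trace_sum, conjTranspose_mul,
    Matrix.mul_assoc]
  refine Finset.sum_congr rfl fun i _ => ?_
  rw [trace_mul_comm]
  simp only [Matrix.mul_assoc]

end WeightedTraceInner

lemma PosDef.trace_conjTranspose_mul_mul_pos {𝕜 m n : Type*} [RCLike 𝕜] [Fintype m]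
    [Fintype n] {Λ : Matrix n n 𝕜} (hΛ : Λ.PosDef) {V : Matrix n m 𝕜} (hV : V ≠ 0) :
    0 < (Vᴴ * Λ * V).trace := by
  obtain ⟨v, hv⟩ : ∃ v, V *ᵥ v ≠ 0 := by
    by_contra! h
    exact hV (ext_iff_mulVec.mpr fun v => by simp [h v])
  have hne : Vᴴ * Λ * V ≠ 0 := fun h0 => by
    have := hΛ.dotProduct_mulVec_pos hv
    rw [star_mulVec, dotProduct_mulVec, vecMul_vecMul, ← dotProduct_mulVec, mulVec_mulVec,
      h0] at this
    simp at this
  have hpsd := hΛ.posSemidef.conjTranspose_mul_mul_same V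
  exact hpsd.trace_nonneg.lt_of_ne (Ne.symm (mt hpsd.trace_eq_zero_iff.mp hne))

end Matrix

lemma EO_eq_sum_krausMix {d D : ℕ} (A : Fin d → Matrix (Fin D) (Fin D) ℂ)
    (u : Matrix (Fin d) (Fin d) ℂ) (X : Matrix (Fin D) (Fin D) ℂ) :
    EO A u X = ∑ m, krausMix u A m * X * (A m)ᴴ := by
  rw [EO, Finset.sum_comm]
  simp [krausMix, Finset.sum_mul]

theorem spectral_radius_le_one_general (d D : ℕ)
    (A : Fin d → Matrix (Fin D) (Fin D) ℂ)
    (hA : ∑ n : Fin d, A n * (A n)ᴴ = 1)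
    (Λ : Matrix (Fin D) (Fin D) ℂ) (hΛ : Λ.PosDef)
    (hΛfix : ∑ n : Fin d, (A n)ᴴ * Λ * A n = Λ)
    (u : Matrix (Fin d) (Fin d) ℂ) (hu : u ∈ Matrix.unitaryGroup (Fin d) ℂ)
    (V : Matrix (Fin D) (Fin D) ℂ) (hV : V ≠ 0) (lam : ℂ)
    (heig : EO A u V = lam • V) :
    ‖lam‖ ≤ 1 := by
  set t := (Vᴴ * Λ * V).trace
  let P := fun m => V * A m
  let Q := fun m => krausMix u A m * V
  have hPQ : weightedTraceInner Λ P Q = lam * t := by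
    rw [weightedTraceInner_mul_right_mul_left, ← EO_eq_sum_krausMix, heig, Matrix.mul_smul,
      trace_smul, smul_eq_mul]
  have hPP : weightedTraceInner Λ P P = t := by
    rw [weightedTraceInner_mul_right, hA, Matrix.mul_one]
  have hQQ : weightedTraceInner Λ Q Q = t := by
    rw [weightedTraceInner_mul_left, sum_conjTranspose_krausMix_mul_mul hu, hΛfix]
  have hCS := norm_weightedTraceInner_sq_le hΛ.posSemidef P Q
  rw [hPQ, hPP, hQQ, norm_mul, mul_pow, ← sq] at hCS
  have ht : 0 < ‖t‖ ^ 2 :=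
    pow_pos (norm_pos_iff.mpr (hΛ.trace_conjTranspose_mul_mul_pos hV).ne') 2
  have hlam : ‖lam‖ ^ 2 ≤ 1 := le_of_mul_le_mul_right (by rwa [one_mul]) ht
  exact (pow_le_one_iff_of_nonneg (norm_nonneg lam) two_ne_zero).mp hlam

/-- Every eigenvalue of `E_u` has modulus at most 1. -/
theorem spectral_radius_le_one (d D : ℕ) (hd : 1 ≤ d) (hD : 1 ≤ D)
    (A : Fin d → Matrix (Fin D) (Fin D) ℂ)
    (hA : ∑ n : Fin d, A n * (A n)ᴴ = 1)
    (Λ : Matrix (Fin D) (Fin D) ℂ) (hΛ : Λ.PosDef) (hΛtr : Λ.trace = 1)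
    (hΛfix : ∑ n : Fin d, (A n)ᴴ * Λ * A n = Λ)
    (u : Matrix (Fin d) (Fin d) ℂ) (hu : u ∈ Matrix.unitaryGroup (Fin d) ℂ)
    (V : Matrix (Fin D) (Fin D) ℂ) (hV : V ≠ 0) (lam : ℂ)
    (heig : EO A u V = lam • V) :
    ‖lam‖ ≤ 1 :=
  spectral_radius_le_one_general d D A hA Λ hΛ hΛfix u hu V hV lam heig
end

section
/- Let u be a d×d complex unitary matrix, and suppose V is a nonzero D×D complex matrix and λ ∈ ℂ with |λ| = 1 satisfy E_u(V) = λ·V. Assume moreover that the only D×D matrices X with E(X) = X are the scalar multiples of the identity. Then, after rescaling V by a positive constant, V is unitary, and for every n one has ∑_m u_{n,m}·A_m = λ·V * A_n * Vᴴ. -/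
/-!
Write `B_k = ∑_j u_{kj} A_j`, so that `E_u(V) = ∑_k B_k V A_kᴴ`; since `u` is unitary, the `B_k`
are another Kraus family of `E`. The defects `M_k = B_k V - λ V A_k` then satisfy
`∑_k M_k M_kᴴ = E(VVᴴ) - VVᴴ`, whose trace against the invariant state `Λ` vanishes. As `Λ` is
faithful, every `M_k` is zero and `VVᴴ` is a fixed point of `E`, hence a positive multiple of the
identity; rescaling `V` to a unitary turns `B_k V = λ V A_k` into the claimed intertwining.
-/

open Matrix Complex
open scoped ComplexOrder

namespace Matrix

variable {R ι m n : Type*} [CommRing R] [StarRing R] [Fintype ι] [Fintype n]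

theorem sum_unitary_mix_mul_mul_conjTranspose [DecidableEq ι] {u : Matrix ι ι R}
    (hu : u ∈ unitaryGroup ι R) (A : ι → Matrix m n R) (Y : Matrix n n R) :
    ∑ k, (∑ j, u k j • A j) * Y * (∑ j, u k j • A j)ᴴ = ∑ k, A k * Y * (A k)ᴴ := by
  have hcols : ∀ j j', ∑ k, u k j * star (u k j') = if j' = j then 1 else 0 := fun j j' => by
    simpa [mul_apply, one_apply, mul_comm] using congr_fun₂ (mem_unitaryGroup_iff'.mp hu) j' j
  calc ∑ k, (∑ j, u k j • A j) * Y * (∑ j, u k j • A j)ᴴ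
      = ∑ k, ∑ j', ∑ j, (u k j * star (u k j')) • (A j * Y * (A j')ᴴ) := by
        simp only [conjTranspose_sum, conjTranspose_smul, Matrix.sum_mul, Matrix.mul_sum,
          Matrix.smul_mul, Matrix.mul_smul, Finset.smul_sum, smul_smul, mul_comm]
    _ = ∑ j', ∑ j, (∑ k, u k j * star (u k j')) • (A j * Y * (A j')ᴴ) := by
        simp only [Finset.sum_smul]
        rw [Finset.sum_comm]
        exact Finset.sum_congr rfl fun j _ => Finset.sum_comm
    _ = ∑ k, A k * Y * (A k)ᴴ := by simp [hcols, ite_smul]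

theorem sum_defect_mul_conjTranspose [DecidableEq n] {A B : ι → Matrix n n R}
    (hA : ∑ k, A k * (A k)ᴴ = 1) {V : Matrix n n R} {lam : R} (hlam : star lam * lam = 1)
    (heig : ∑ k, B k * V * (A k)ᴴ = lam • V) :
    ∑ k, (B k * V - lam • (V * A k)) * (B k * V - lam • (V * A k))ᴴ
      = ∑ k, B k * (V * Vᴴ) * (B k)ᴴ - V * Vᴴ := by
  have heig' : ∑ k, A k * Vᴴ * (B k)ᴴ = star lam • Vᴴ := by
    simpa [conjTranspose_sum, Matrix.mul_assoc] using congrArg conjTranspose heig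
  have expand : ∀ k, (B k * V - lam • (V * A k)) * (B k * V - lam • (V * A k))ᴴ
      = B k * (V * Vᴴ) * (B k)ᴴ - star lam • (B k * V * (A k)ᴴ * Vᴴ)
        - lam • (V * (A k * Vᴴ * (B k)ᴴ)) + (star lam * lam) • (V * (A k * (A k)ᴴ) * Vᴴ) := by
    intro k
    simp only [conjTranspose_sub, conjTranspose_smul, conjTranspose_mul, sub_mul, mul_sub,
      smul_mul_assoc, mul_smul_comm, smul_sub, mul_smul, Matrix.mul_assoc]
    abel
  simp only [expand, Finset.sum_add_distrib, Finset.sum_sub_distrib, ← Finset.smul_sum,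
    ← Finset.sum_mul, ← Finset.mul_sum, heig, heig', hA, hlam, smul_mul_assoc, mul_smul_comm,
    smul_smul, mul_one, one_smul, mul_comm lam]
  abel

theorem trace_mul_sum_mul_mul_conjTranspose [Fintype m] {A : ι → Matrix n m R} (Λ : Matrix n n R)
    (X : Matrix m m R) :
    (Λ * ∑ k, A k * X * (A k)ᴴ).trace = ((∑ k, (A k)ᴴ * Λ * A k) * X).trace := by
  simp only [Matrix.mul_sum, Matrix.sum_mul, trace_sum]
  refine Finset.sum_congr rfl fun k _ => ?_
  rw [← Matrix.mul_assoc, trace_mul_comm, ← Matrix.mul_assoc, ← Matrix.mul_assoc]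

end Matrix

namespace Matrix

variable {𝕜 ι m n : Type*} [RCLike 𝕜] [Fintype ι] [Fintype m] [Fintype n]

theorem PosSemidef.trace_mul_self_mul_conjTranspose_nonneg {Λ : Matrix n n 𝕜}
    (hΛ : Λ.PosSemidef) (M : Matrix n m 𝕜) : 0 ≤ (Λ * (M * Mᴴ)).trace := by
  rw [← Matrix.mul_assoc, trace_mul_comm, ← Matrix.mul_assoc]
  exact (hΛ.conjTranspose_mul_mul_same M).trace_nonneg

open scoped MatrixOrder in
theorem PosDef.trace_mul_self_mul_conjTranspose_eq_zero_iff {Λ : Matrix n n 𝕜}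
    (hΛ : Λ.PosDef) {M : Matrix n m 𝕜} : (Λ * (M * Mᴴ)).trace = 0 ↔ M = 0 := by
  classical
  refine ⟨fun h => ?_, fun h => by simp [h]⟩
  obtain ⟨y, hy, rfl⟩ := CStarAlgebra.isStrictlyPositive_iff_eq_star_mul_self.mp
    hΛ.isStrictlyPositive
  rw [star_eq_conjTranspose, Matrix.mul_assoc, trace_mul_comm, Matrix.mul_assoc, Matrix.mul_assoc,
    ← Matrix.mul_assoc y, ← conjTranspose_mul, trace_mul_conjTranspose_self_eq_zero_iff] at h
  simpa [nonsing_inv_mul_cancel_left _ _ ((isUnit_iff_isUnit_det y).mp hy)] using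
    congr(y⁻¹ * $h)

theorem PosDef.eq_zero_of_trace_mul_sum_self_mul_conjTranspose_eq_zero {Λ : Matrix n n 𝕜}
    (hΛ : Λ.PosDef) {M : ι → Matrix n m 𝕜} (h : (Λ * ∑ k, M k * (M k)ᴴ).trace = 0) (k : ι) :
    M k = 0 := by
  rw [Matrix.mul_sum, trace_sum, Finset.sum_eq_zero_iff_of_nonneg fun k _ =>
    hΛ.posSemidef.trace_mul_self_mul_conjTranspose_nonneg (M k)] at h
  exact hΛ.trace_mul_self_mul_conjTranspose_eq_zero_iff.mp (h k (Finset.mem_univ k))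

theorem fixed_and_intertwining_of_eigen [DecidableEq ι] [DecidableEq n]
    {A : ι → Matrix n n 𝕜} (hA : ∑ k, A k * (A k)ᴴ = 1) {Λ : Matrix n n 𝕜} (hΛ : Λ.PosDef)
    (hΛfix : ∑ k, (A k)ᴴ * Λ * A k = Λ) {u : Matrix ι ι 𝕜} (hu : u ∈ unitaryGroup ι 𝕜)
    {V : Matrix n n 𝕜} {lam : 𝕜} (hlam : star lam * lam = 1)
    (heig : ∑ k, (∑ j, u k j • A j) * V * (A k)ᴴ = lam • V) :
    ∑ k, A k * (V * Vᴴ) * (A k)ᴴ = V * Vᴴ ∧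
      ∀ k, (∑ j, u k j • A j) * V = lam • (V * A k) := by
  have hdefect := sum_defect_mul_conjTranspose hA hlam heig
  rw [sum_unitary_mix_mul_mul_conjTranspose hu] at hdefect
  have htrace := congrArg (fun X => (Λ * X).trace) hdefect
  simp only [mul_sub, trace_sub, trace_mul_sum_mul_mul_conjTranspose, hΛfix, sub_self] at htrace
  have hzero := hΛ.eq_zero_of_trace_mul_sum_self_mul_conjTranspose_eq_zero htrace
  refine ⟨?_, fun k => sub_eq_zero.mp (hzero k)⟩
  rw [← sub_eq_zero, ← hdefect]
  simp [hzero]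

theorem exists_pos_smul_mem_unitaryGroup_of_mul_conjTranspose_eq_smul_one [DecidableEq n]
    {V : Matrix n n 𝕜} (hV : V ≠ 0) {c : 𝕜} (hc : V * Vᴴ = c • 1) :
    ∃ r : ℝ, 0 < r ∧ (r : 𝕜) • V ∈ unitaryGroup n 𝕜 := by
  obtain ⟨i, -⟩ : ∃ i j, V i j ≠ 0 := by
    by_contra! h
    exact hV (ext h)
  have hc_nonneg : 0 ≤ c := by
    simpa [hc] using (posSemidef_self_mul_conjTranspose V).diag_nonneg (i := i)
  have hc_ne : c ≠ 0 := by
    rintro rfl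
    exact hV (self_mul_conjTranspose_eq_zero.mp (by simpa using hc))
  obtain ⟨x, hx, rfl⟩ := RCLike.pos_iff_exists_ofReal.mp (hc_nonneg.lt_of_ne' hc_ne)
  refine ⟨(√x)⁻¹, by positivity, mem_unitaryGroup_iff.mpr ?_⟩
  rw [star_eq_conjTranspose, conjTranspose_smul, Matrix.smul_mul, Matrix.mul_smul, hc, smul_smul,
    smul_smul, RCLike.star_def, RCLike.conj_ofReal, ← RCLike.ofReal_mul, ← RCLike.ofReal_mul,
    ← mul_inv, Real.mul_self_sqrt hx.le, inv_mul_cancel₀ hx.ne', RCLike.ofReal_one, one_smul]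

end Matrix

theorem EO_eq_sum {d D : ℕ} (A : Fin d → Matrix (Fin D) (Fin D) ℂ) (O : Matrix (Fin d) (Fin d) ℂ)
    (X : Matrix (Fin D) (Fin D) ℂ) :
    EO A O X = ∑ k, (∑ j, O k j • A j) * X * (A k)ᴴ := by
  rw [EO, Finset.sum_comm]
  simp only [Matrix.sum_mul, Matrix.smul_mul]

theorem modulus_one_eigenvector_is_unitary_intertwiner_general (d D : ℕ)
    (A : Fin d → Matrix (Fin D) (Fin D) ℂ)
    (hA : ∑ n : Fin d, A n * (A n)ᴴ = 1)
    (Λ : Matrix (Fin D) (Fin D) ℂ) (hΛ : Λ.PosDef)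
    (hΛfix : ∑ n : Fin d, (A n)ᴴ * Λ * A n = Λ)
    (u : Matrix (Fin d) (Fin d) ℂ) (hu : u ∈ Matrix.unitaryGroup (Fin d) ℂ)
    (V : Matrix (Fin D) (Fin D) ℂ) (hV : V ≠ 0) (lam : ℂ)
    (hlam : ‖lam‖ = 1)
    (heig : EO A u V = lam • V)
    (hfix : ∀ X : Matrix (Fin D) (Fin D) ℂ,
      (∑ n : Fin d, A n * X * (A n)ᴴ) = X → ∃ c : ℂ, X = c • (1 : Matrix (Fin D) (Fin D) ℂ)) :
    ∃ c : ℝ, 0 < c ∧ (c : ℂ) • V ∈ Matrix.unitaryGroup (Fin D) ℂ ∧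
      ∀ n : Fin d, ∑ m : Fin d, u n m • A m
        = lam • (((c : ℂ) • V) * A n * ((c : ℂ) • V)ᴴ) := by
  have hlam' : star lam * lam = 1 := by simp [RCLike.star_def, RCLike.conj_mul, hlam]
  obtain ⟨hVfix, hintertwine⟩ :=
    fixed_and_intertwining_of_eigen hA hΛ hΛfix hu hlam' ((EO_eq_sum A u V).symm.trans heig)
  obtain ⟨c, hc⟩ := hfix _ hVfix
  obtain ⟨r, hr, hW⟩ := exists_pos_smul_mem_unitaryGroup_of_mul_conjTranspose_eq_smul_one hV hc
  have hWW : ((r : ℂ) • V) * ((r : ℂ) • V)ᴴ = 1 := mem_unitaryGroup_iff.mp hW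
  refine ⟨r, hr, hW, fun k => ?_⟩
  calc ∑ m, u k m • A m = (∑ m, u k m • A m) * ((r : ℂ) • V) * ((r : ℂ) • V)ᴴ := by
        rw [Matrix.mul_assoc, hWW, mul_one]
    _ = lam • (((r : ℂ) • V) * A k * ((r : ℂ) • V)ᴴ) := by
        rw [Matrix.mul_smul, hintertwine k, smul_comm]
        simp only [Matrix.smul_mul, Matrix.mul_assoc]

/-- If `E_u(V) = λ V` with `|λ| = 1` and the channel `E` has only trivial fixed
points, then (after rescaling by a positive constant) `V` is unitary and
intertwines the `A`'s: `∑_m u_{n,m} A_m = λ V A_n Vᴴ`. -/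
theorem modulus_one_eigenvector_is_unitary_intertwiner (d D : ℕ)
    (hd : 1 ≤ d) (hD : 1 ≤ D)
    (A : Fin d → Matrix (Fin D) (Fin D) ℂ)
    (hA : ∑ n : Fin d, A n * (A n)ᴴ = 1)
    (Λ : Matrix (Fin D) (Fin D) ℂ) (hΛ : Λ.PosDef) (hΛtr : Λ.trace = 1)
    (hΛfix : ∑ n : Fin d, (A n)ᴴ * Λ * A n = Λ)
    (u : Matrix (Fin d) (Fin d) ℂ) (hu : u ∈ Matrix.unitaryGroup (Fin d) ℂ)
    (V : Matrix (Fin D) (Fin D) ℂ) (hV : V ≠ 0) (lam : ℂ)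
    (hlam : ‖lam‖ = 1)
    (heig : EO A u V = lam • V)
    (hfix : ∀ X : Matrix (Fin D) (Fin D) ℂ,
      (∑ n : Fin d, A n * X * (A n)ᴴ) = X → ∃ c : ℂ, X = c • (1 : Matrix (Fin D) (Fin D) ℂ)) :
    ∃ c : ℝ, 0 < c ∧ (c : ℂ) • V ∈ Matrix.unitaryGroup (Fin D) ℂ ∧
      ∀ n : Fin d, ∑ m : Fin d, u n m • A m
        = lam • (((c : ℂ) • V) * A n * ((c : ℂ) • V)ᴴ) :=
  modulus_one_eigenvector_is_unitary_intertwiner_general d D A hA Λ hΛ hΛfix u hu V hV lam hlam heig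
    hfix
end

section
/- Let u be a d×d complex unitary matrix, θ ∈ ℝ, and let V be a D×D complex matrix (not assumed unitary) such that for every n one has ∑_m u_{n,m}·A_m = e^{iθ}·V * A_n * Vᴴ with V invertible, or more generally such that (∑_m u_{n,m}·A_m) * Vᴴ = e^{iθ}·Vᴴ * A_n for all n. Then E(Vᴴ * V) = Vᴴ * V, i.e. Vᴴ V is a fixed point of the channel E. Consequently, if the only fixed points of E are scalar multiples of the identity, then Vᴴ V is proportional to the identity. -/
open Matrix Complex

/-! The channel `X ↦ ∑ A X Aᴴ` does not change when its Kraus operators are mixed by a unitary,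
so `E(Vᴴ V) = ∑ B (Vᴴ V) Bᴴ` with `B n = ∑ m, u n m • A m`. The intertwining relation rewrites
`B n Vᴴ` as `e^{iθ} Vᴴ A n`; the phase cancels against its conjugate, leaving
`Vᴴ (∑ A Aᴴ) V = Vᴴ V`. -/

section KrausSum

variable {R ι m : Type*} [CommRing R] [StarRing R] [Fintype ι] [Fintype m]

theorem Matrix.sum_smul_mul_mul_conjTranspose_sum_smul (a b : ι → R) (M N : ι → Matrix m m R)
    (X : Matrix m m R) :
    (∑ k, a k • M k) * X * (∑ l, b l • N l)ᴴ
      = ∑ k, ∑ l, (a k * star (b l)) • (M k * X * (N l)ᴴ) := by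
  simp only [conjTranspose_sum, conjTranspose_smul, Matrix.sum_mul, Matrix.mul_sum,
    Matrix.smul_mul, Matrix.mul_smul, Finset.smul_sum, smul_smul]
  rw [Finset.sum_comm]
  simp only [mul_comm]

theorem Matrix.sum_unitary_mix_mul_conjTranspose [DecidableEq ι] (A : ι → Matrix m m R)
    {u : Matrix ι ι R} (hu : u ∈ unitaryGroup ι R) (X : Matrix m m R) :
    ∑ n, (∑ k, u n k • A k) * X * (∑ k, u n k • A k)ᴴ = ∑ n, A n * X * (A n)ᴴ := by
  have huu : uᴴ * u = 1 := hu.1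
  calc ∑ n, (∑ k, u n k • A k) * X * (∑ k, u n k • A k)ᴴ
      = ∑ n, ∑ k, ∑ l, (u n k * star (u n l)) • (A k * X * (A l)ᴴ) := by
        simp only [sum_smul_mul_mul_conjTranspose_sum_smul]
    _ = ∑ k, ∑ l, (uᴴ * u) l k • (A k * X * (A l)ᴴ) := by
        rw [Finset.sum_comm]
        refine Finset.sum_congr rfl fun k _ => ?_
        rw [Finset.sum_comm]
        simp only [← Finset.sum_smul, Matrix.mul_apply, conjTranspose_apply, mul_comm]
    _ = ∑ n, A n * X * (A n)ᴴ := by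
        simp [huu, Matrix.one_apply]

theorem Matrix.sum_mul_mul_self_conjTranspose_of_intertwine (A B : ι → Matrix m m R)
    (W : Matrix m m R) {c : R} (hc : star c * c = 1) (hBA : ∀ n, B n * W = c • (W * A n)) :
    ∑ n, B n * (W * Wᴴ) * (B n)ᴴ = W * (∑ n, A n * (A n)ᴴ) * Wᴴ := by
  calc ∑ n, B n * (W * Wᴴ) * (B n)ᴴ
      = ∑ n, (B n * W) * (B n * W)ᴴ := by
        simp only [conjTranspose_mul, Matrix.mul_assoc]
    _ = ∑ n, (star c * c) • (W * (A n * (A n)ᴴ) * Wᴴ) := by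
        simp only [hBA, conjTranspose_smul, conjTranspose_mul, Matrix.smul_mul, Matrix.mul_smul,
          smul_smul, Matrix.mul_assoc]
    _ = W * (∑ n, A n * (A n)ᴴ) * Wᴴ := by
        simp only [hc, one_smul, Matrix.mul_sum, Matrix.sum_mul]

end KrausSum

theorem conjTranspose_mul_self_fixed_point_general (d D : ℕ)
    (A : Fin d → Matrix (Fin D) (Fin D) ℂ)
    (hA : ∑ n : Fin d, A n * (A n)ᴴ = 1)
    (u : Matrix (Fin d) (Fin d) ℂ) (hu : u ∈ Matrix.unitaryGroup (Fin d) ℂ)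
    (θ : ℝ) (V : Matrix (Fin D) (Fin D) ℂ)
    (hint : ∀ n : Fin d, (∑ m : Fin d, u n m • A m) * Vᴴ
      = Complex.exp (θ * Complex.I) • (Vᴴ * A n)) :
    (∑ n : Fin d, A n * (Vᴴ * V) * (A n)ᴴ) = Vᴴ * V ∧
    ((∀ X : Matrix (Fin D) (Fin D) ℂ,
        (∑ n : Fin d, A n * X * (A n)ᴴ) = X →
        ∃ c : ℂ, X = c • (1 : Matrix (Fin D) (Fin D) ℂ)) →
      ∃ c : ℂ, Vᴴ * V = c • (1 : Matrix (Fin D) (Fin D) ℂ)) := by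
  have hphase : star (exp (θ * I)) * exp (θ * I) = 1 := by
    simpa [normSq_eq_norm_sq, norm_exp_ofReal_mul_I] using conj_mul' (exp (θ * I))
  have hfix : ∑ n, A n * (Vᴴ * V) * (A n)ᴴ = Vᴴ * V := by
    have h := sum_mul_mul_self_conjTranspose_of_intertwine A _ Vᴴ hphase hint
    rwa [conjTranspose_conjTranspose, sum_unitary_mix_mul_conjTranspose A hu, hA,
      Matrix.mul_one] at h
  exact ⟨hfix, fun htrivial => htrivial _ hfix⟩

/-- If `(∑_m u_{n,m} A_m) Vᴴ = e^{iθ} Vᴴ A_n` for all `n`, then `Vᴴ V` is a fixed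
point of the channel `E(X) = ∑_n A_n X A_nᴴ`; consequently, if `E` has only
trivial fixed points then `Vᴴ V` is proportional to the identity. -/
theorem conjTranspose_mul_self_fixed_point (d D : ℕ) (hd : 1 ≤ d) (hD : 1 ≤ D)
    (A : Fin d → Matrix (Fin D) (Fin D) ℂ)
    (hA : ∑ n : Fin d, A n * (A n)ᴴ = 1)
    (u : Matrix (Fin d) (Fin d) ℂ) (hu : u ∈ Matrix.unitaryGroup (Fin d) ℂ)
    (θ : ℝ) (V : Matrix (Fin D) (Fin D) ℂ)
    (hint : ∀ n : Fin d, (∑ m : Fin d, u n m • A m) * Vᴴ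
      = Complex.exp (θ * Complex.I) • (Vᴴ * A n)) :
    (∑ n : Fin d, A n * (Vᴴ * V) * (A n)ᴴ) = Vᴴ * V ∧
    ((∀ X : Matrix (Fin D) (Fin D) ℂ,
        (∑ n : Fin d, A n * X * (A n)ᴴ) = X →
        ∃ c : ℂ, X = c • (1 : Matrix (Fin D) (Fin D) ℂ)) →
      ∃ c : ℂ, Vᴴ * V = c • (1 : Matrix (Fin D) (Fin D) ℂ)) :=
  conjTranspose_mul_self_fixed_point_general d D A hA u hu θ V hint
end

section
/- Let u be a d×d complex unitary matrix, and suppose there exist a D×D unitary matrix V and λ ∈ ℂ with |λ| = 1 such that ∑_m u_{n,m}·A_m = λ·V * A_n * Vᴴ for all n. Then the Hilbert–Schmidt adjoint E_u† of E_u (the unique linear map satisfying tr(Yᴴ · E_u(X)) = tr((E_u†(Y))ᴴ · X) for all X, Y) satisfies E_u†(Λ * V) = conj(λ) · Λ * V. That is, Λ·V is a left eigenvector of E_u corresponding to its modulus-one eigenvalue. -/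
open Matrix Complex
open scoped ComplexOrder

/-- The Hilbert–Schmidt adjoint of `E_O`:
`E_O†(Y) = ∑_{n,n'} conj(O_{n',n}) · (A_n)ᴴ Y A_{n'}`. -/
noncomputable def EOadj {d D : ℕ} (A : Fin d → Matrix (Fin D) (Fin D) ℂ)
    (O : Matrix (Fin d) (Fin d) ℂ) (Y : Matrix (Fin D) (Fin D) ℂ) :
    Matrix (Fin D) (Fin D) ℂ :=
  ∑ n : Fin d, ∑ n' : Fin d, (starRingEnd ℂ) (O n' n) • ((A n)ᴴ * Y * A n')


/-!
Since `u` is unitary, the relation `∑_m u_{nm} A_m = λ V A_n Vᴴ` can be inverted to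
`∑_{n'} conj(u_{n'n}) A_{n'} = conj λ · Vᴴ A_n V`. Substituting this into
`E_u†(Λ V) = ∑_n A_nᴴ Λ V (∑_{n'} conj(u_{n'n}) A_{n'})`, the factors `V Vᴴ` cancel and the
fixed-point equation `∑_n A_nᴴ Λ A_n = Λ` leaves `conj λ · Λ V`. The adjoint identity itself is
cyclicity of the trace, term by term.
-/

section Unitary

variable {ι R M : Type*} [Fintype ι] [DecidableEq ι] [CommRing R] [StarRing R]
  [AddCommMonoid M] [Module R M]

theorem sum_star_smul_eq_of_sum_smul_eq {u : Matrix ι ι R} (hu : u ∈ unitaryGroup ι R)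
    {B C : ι → M} (h : ∀ n, ∑ m, u n m • B m = C n) (n : ι) :
    ∑ n', star (u n' n) • C n' = B n := by
  have huu : ∀ m, ∑ n', star (u n' n) * u n' m = (1 : Matrix ι ι R) n m := fun m => by
    rw [← mem_unitaryGroup_iff'.mp hu, mul_apply]
    rfl
  simp_rw [← h, Finset.smul_sum, smul_smul]
  rw [Finset.sum_comm]
  simp_rw [← Finset.sum_smul, huu, one_apply, ite_smul, one_smul, zero_smul]
  simp

end Unitary

theorem trace_conjTranspose_mul_EO {d D : ℕ} (A : Fin d → Matrix (Fin D) (Fin D) ℂ)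
    (O : Matrix (Fin d) (Fin d) ℂ) (X Y : Matrix (Fin D) (Fin D) ℂ) :
    (Yᴴ * EO A O X).trace = ((EOadj A O Y)ᴴ * X).trace := by
  simp only [EO, EOadj, Matrix.mul_sum, Matrix.sum_mul, conjTranspose_sum, trace_sum,
    Matrix.mul_smul, Matrix.smul_mul, conjTranspose_smul, trace_smul, starRingEnd_apply,
    star_star, conjTranspose_mul, conjTranspose_conjTranspose]
  refine Finset.sum_congr rfl fun n _ => Finset.sum_congr rfl fun n' _ => ?_
  rw [← Matrix.mul_assoc, trace_mul_comm]
  simp only [Matrix.mul_assoc]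

theorem EOadj_eq_sum_mul_sum {d D : ℕ} (A : Fin d → Matrix (Fin D) (Fin D) ℂ)
    (O : Matrix (Fin d) (Fin d) ℂ) (Y : Matrix (Fin D) (Fin D) ℂ) :
    EOadj A O Y = ∑ n, (A n)ᴴ * Y * ∑ n', starRingEnd ℂ (O n' n) • A n' := by
  simp only [EOadj, Matrix.mul_sum, Matrix.mul_smul]

theorem sum_conj_smul_eq_of_intertwine {d D : ℕ} {A : Fin d → Matrix (Fin D) (Fin D) ℂ}
    {u : Matrix (Fin d) (Fin d) ℂ} (hu : u ∈ unitaryGroup (Fin d) ℂ)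
    {V : Matrix (Fin D) (Fin D) ℂ} (hV : V ∈ unitaryGroup (Fin D) ℂ) {lam : ℂ} (hlam : ‖lam‖ = 1)
    (hint : ∀ n, ∑ m, u n m • A m = lam • (V * A n * Vᴴ)) (n : Fin d) :
    ∑ n', starRingEnd ℂ (u n' n) • A n' = starRingEnd ℂ lam • (Vᴴ * A n * V) := by
  set S := ∑ n', starRingEnd ℂ (u n' n) • A n'
  have hVV : Vᴴ * V = 1 := mem_unitaryGroup_iff'.mp hV
  have hlam' : starRingEnd ℂ lam * lam = 1 := by
    rw [Complex.conj_mul', hlam]; norm_num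
  have hA : A n = lam • (V * S * Vᴴ) := by
    rw [← sum_star_smul_eq_of_sum_smul_eq hu hint n]
    simp only [S, Matrix.mul_sum, Matrix.sum_mul, Finset.smul_sum, Matrix.mul_smul,
      Matrix.smul_mul, smul_comm lam, starRingEnd_apply]
  rw [hA, Matrix.mul_smul, Matrix.smul_mul, smul_smul, hlam', one_smul]
  simp only [← Matrix.mul_assoc, hVV, Matrix.one_mul]
  rw [Matrix.mul_assoc, hVV, Matrix.mul_one]

theorem left_eigenvector_general (d D : ℕ)
    (A : Fin d → Matrix (Fin D) (Fin D) ℂ)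
    (Λ : Matrix (Fin D) (Fin D) ℂ)
    (hΛfix : ∑ n : Fin d, (A n)ᴴ * Λ * A n = Λ)
    (u : Matrix (Fin d) (Fin d) ℂ) (hu : u ∈ Matrix.unitaryGroup (Fin d) ℂ)
    (V : Matrix (Fin D) (Fin D) ℂ) (hV : V ∈ Matrix.unitaryGroup (Fin D) ℂ)
    (lam : ℂ) (hlam : ‖lam‖ = 1)
    (hint : ∀ n : Fin d, ∑ m : Fin d, u n m • A m = lam • (V * A n * Vᴴ)) :
    (∀ X Y : Matrix (Fin D) (Fin D) ℂ,
        (Yᴴ * EO A u X).trace = ((EOadj A u Y)ᴴ * X).trace) ∧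
    EOadj A u (Λ * V) = (starRingEnd ℂ) lam • (Λ * V) := by
  refine ⟨fun X Y => trace_conjTranspose_mul_EO A u X Y, ?_⟩
  have hVV : V * Vᴴ = 1 := mem_unitaryGroup_iff.mp hV
  calc EOadj A u (Λ * V)
      = ∑ n, (A n)ᴴ * (Λ * V) * (starRingEnd ℂ lam • (Vᴴ * A n * V)) := by
        simp only [EOadj_eq_sum_mul_sum, sum_conj_smul_eq_of_intertwine hu hV hlam hint]
    _ = starRingEnd ℂ lam • ((∑ n, (A n)ᴴ * Λ * A n) * V) := by
        simp only [Finset.smul_sum, Matrix.sum_mul, Matrix.mul_smul, Matrix.mul_assoc]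
        simp only [← Matrix.mul_assoc V, hVV, Matrix.one_mul]
    _ = starRingEnd ℂ lam • (Λ * V) := by rw [hΛfix]

/-- `Λ V` is a left eigenvector of `E_u` for its modulus-one eigenvalue: the
Hilbert–Schmidt adjoint `E_u†` (characterized by
`tr(Yᴴ E_u(X)) = tr((E_u†(Y))ᴴ X)`) satisfies `E_u†(Λ V) = conj(λ) Λ V`. -/
theorem left_eigenvector (d D : ℕ) (hd : 1 ≤ d) (hD : 1 ≤ D)
    (A : Fin d → Matrix (Fin D) (Fin D) ℂ)
    (hA : ∑ n : Fin d, A n * (A n)ᴴ = 1)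
    (Λ : Matrix (Fin D) (Fin D) ℂ) (hΛ : Λ.PosDef) (hΛtr : Λ.trace = 1)
    (hΛfix : ∑ n : Fin d, (A n)ᴴ * Λ * A n = Λ)
    (u : Matrix (Fin d) (Fin d) ℂ) (hu : u ∈ Matrix.unitaryGroup (Fin d) ℂ)
    (V : Matrix (Fin D) (Fin D) ℂ) (hV : V ∈ Matrix.unitaryGroup (Fin D) ℂ)
    (lam : ℂ) (hlam : ‖lam‖ = 1)
    (hint : ∀ n : Fin d, ∑ m : Fin d, u n m • A m = lam • (V * A n * Vᴴ)) :
    (∀ X Y : Matrix (Fin D) (Fin D) ℂ,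
        (Yᴴ * EO A u X).trace = ((EOadj A u Y)ᴴ * X).trace) ∧
    EOadj A u (Λ * V) = (starRingEnd ℂ) lam • (Λ * V) :=
  left_eigenvector_general d D A Λ hΛfix u hu V hV lam hlam hint
end

section
/- Let u be a d×d complex unitary matrix, and suppose there exist a D×D unitary matrix V and λ ∈ ℂ with |λ| = 1 such that ∑_m u_{n,m}·A_m = λ·V * A_n * Vᴴ for all n. Assume in addition that the only D×D matrices Y with ∑_n (A_n)ᴴ * Y * A_n = Y are the scalar multiples of Λ. Then Vᴴ * Λ * V = Λ, i.e. conjugation by the unitary V leaves Λ invariant. -/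
/-!
Mixing the Kraus operators `A n` by the unitary `u` does not change the transfer map
`Y ↦ ∑ n, (A n)ᴴ * Y * A n`, while the intertwining relation says the mixed operators are
`lam • (V * A n * Vᴴ)`; as `|lam| = 1`, the transfer map of these is the conjugate of the
original one by `V`. Hence `Vᴴ * Λ * V` is again a fixed point, so it is `c • Λ` by uniqueness,
and comparing traces gives `c = 1`.
-/

open Matrix
open scoped ComplexOrder

namespace Matrix

variable {ι m n R : Type*} [Fintype ι] [Fintype m] [CommRing R] [StarRing R]

theorem sum_conjTranspose_mul_mul_of_unitary_mix [DecidableEq ι] {u : Matrix ι ι R}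
    (hu : u ∈ unitaryGroup ι R) (A : ι → Matrix m n R) (Y : Matrix m m R) :
    ∑ i, (∑ j, u i j • A j)ᴴ * Y * (∑ j, u i j • A j) = ∑ i, (A i)ᴴ * Y * A i := by
  have hu' : ∀ j k, ∑ i, star (u i j) * u i k = (1 : Matrix ι ι R) j k := fun j k => by
    rw [← (mem_unitaryGroup_iff'.mp hu)]
    simp [mul_apply, star_apply]
  calc ∑ i, (∑ j, u i j • A j)ᴴ * Y * (∑ j, u i j • A j)
      = ∑ i, ∑ j, ∑ k, (star (u i j) * u i k) • ((A j)ᴴ * Y * A k) := by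
        simp only [conjTranspose_sum, conjTranspose_smul, Matrix.sum_mul, Matrix.mul_sum,
          Matrix.smul_mul, Matrix.mul_smul, Finset.smul_sum, smul_smul]
        refine Finset.sum_congr rfl fun i _ => ?_
        rw [Finset.sum_comm]
        simp only [mul_comm]
    _ = ∑ j, ∑ k, (∑ i, star (u i j) * u i k) • ((A j)ᴴ * Y * A k) := by
        simp only [Finset.sum_smul]
        rw [Finset.sum_comm]
        refine Finset.sum_congr rfl fun j _ => ?_
        rw [Finset.sum_comm]
    _ = ∑ i, (A i)ᴴ * Y * A i := by
        simp [hu', one_apply]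

theorem sum_conjTranspose_mul_mul_smul_conj [Fintype n] {lam : R} (hlam : star lam * lam = 1)
    (V : Matrix m n R) (A : ι → Matrix n n R) (Y : Matrix m m R) :
    ∑ i, (lam • (V * A i * Vᴴ))ᴴ * Y * (lam • (V * A i * Vᴴ)) =
      V * (∑ i, (A i)ᴴ * (Vᴴ * Y * V) * A i) * Vᴴ := by
  simp only [Matrix.mul_sum, Matrix.sum_mul]
  refine Finset.sum_congr rfl fun i _ => ?_
  simp only [conjTranspose_smul, conjTranspose_mul, conjTranspose_conjTranspose,
    Matrix.smul_mul, Matrix.mul_smul, smul_smul, mul_comm lam, hlam, one_smul, Matrix.mul_assoc]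

end Matrix

theorem lambda_invariant_general (d D : ℕ)
    (A : Fin d → Matrix (Fin D) (Fin D) ℂ)
    (Λ : Matrix (Fin D) (Fin D) ℂ) (hΛtr : Λ.trace = 1)
    (hΛfix : ∑ n : Fin d, (A n)ᴴ * Λ * A n = Λ)
    (u : Matrix (Fin d) (Fin d) ℂ) (hu : u ∈ Matrix.unitaryGroup (Fin d) ℂ)
    (V : Matrix (Fin D) (Fin D) ℂ) (hV : V ∈ Matrix.unitaryGroup (Fin D) ℂ)
    (lam : ℂ) (hlam : ‖lam‖ = 1)
    (hint : ∀ n : Fin d, ∑ m : Fin d, u n m • A m = lam • (V * A n * Vᴴ))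
    (hΛuniq : ∀ Y : Matrix (Fin D) (Fin D) ℂ,
      (∑ n : Fin d, (A n)ᴴ * Y * A n) = Y → ∃ c : ℂ, Y = c • Λ) :
    Vᴴ * Λ * V = Λ := by
  have hVV : Vᴴ * V = 1 := mem_unitaryGroup_iff'.mp hV
  have hVV' : V * Vᴴ = 1 := mem_unitaryGroup_iff.mp hV
  have hlam' : star lam * lam = 1 := by simpa [hlam] using Complex.conj_mul' lam
  have hconj : V * (∑ n, (A n)ᴴ * (Vᴴ * Λ * V) * A n) * Vᴴ = Λ := by
    rw [← sum_conjTranspose_mul_mul_smul_conj hlam']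
    simp only [← hint]
    exact (sum_conjTranspose_mul_mul_of_unitary_mix hu A Λ).trans hΛfix
  have hfix : ∑ n, (A n)ᴴ * (Vᴴ * Λ * V) * A n = Vᴴ * Λ * V := by
    calc ∑ n, (A n)ᴴ * (Vᴴ * Λ * V) * A n
        = (Vᴴ * V) * (∑ n, (A n)ᴴ * (Vᴴ * Λ * V) * A n) * (Vᴴ * V) := by
          rw [hVV, Matrix.one_mul, Matrix.mul_one]
      _ = Vᴴ * (V * (∑ n, (A n)ᴴ * (Vᴴ * Λ * V) * A n) * Vᴴ) * V := by
          simp only [Matrix.mul_assoc]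
      _ = Vᴴ * Λ * V := by rw [hconj]
  obtain ⟨c, hc⟩ := hΛuniq _ hfix
  have hc1 : c = 1 := by
    have htr : (Vᴴ * Λ * V).trace = Λ.trace := by
      rw [trace_mul_cycle, hVV', Matrix.one_mul]
    simpa [hc, hΛtr] using htr
  rw [hc, hc1, one_smul]

/-- If `V` is a unitary intertwiner (`∑_m u_{n,m} A_m = λ V A_n Vᴴ`, `|λ| = 1`)
and `Λ` is the unique (up to scalars) solution of `∑_n A_nᴴ Y A_n = Y`, then
conjugation by `V` leaves `Λ` invariant: `Vᴴ Λ V = Λ`. -/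
theorem lambda_invariant (d D : ℕ) (hd : 1 ≤ d) (hD : 1 ≤ D)
    (A : Fin d → Matrix (Fin D) (Fin D) ℂ)
    (hA : ∑ n : Fin d, A n * (A n)ᴴ = 1)
    (Λ : Matrix (Fin D) (Fin D) ℂ) (hΛ : Λ.PosDef) (hΛtr : Λ.trace = 1)
    (hΛfix : ∑ n : Fin d, (A n)ᴴ * Λ * A n = Λ)
    (u : Matrix (Fin d) (Fin d) ℂ) (hu : u ∈ Matrix.unitaryGroup (Fin d) ℂ)
    (V : Matrix (Fin D) (Fin D) ℂ) (hV : V ∈ Matrix.unitaryGroup (Fin D) ℂ)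
    (lam : ℂ) (hlam : ‖lam‖ = 1)
    (hint : ∀ n : Fin d, ∑ m : Fin d, u n m • A m = lam • (V * A n * Vᴴ))
    (hΛuniq : ∀ Y : Matrix (Fin D) (Fin D) ℂ,
      (∑ n : Fin d, (A n)ᴴ * Y * A n) = Y → ∃ c : ℂ, Y = c • Λ) :
    Vᴴ * Λ * V = Λ :=
  lambda_invariant_general d D A Λ hΛtr hΛfix u hu V hV lam hlam hint hΛuniq
end

section
/- For each m ≥ 1 let S_m ⊆ Matrix (Fin D) (Fin D) ℂ denote the linear span of all products A_{n_1}···A_{n_m} · (A_{k_m})ᴴ···(A_{k_1})ᴴ over all index tuples in (Fin d)^m. Assume the injectivity condition: there exists N₀ such that the linear span of {A_{n_1}···A_{n_{N₀}} : (n_1,…,n_{N₀}) ∈ (Fin d)^{N₀}} is all of Matrix (Fin D) (Fin D) ℂ, and that this then also holds for every N ≥ N₀. Then S_{D²} = Matrix (Fin D) (Fin D) ℂ, i.e. the products of length D² together with their adjoints already span the full matrix algebra. -/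
/-!
The spaces `S_m` are obtained by iterating the map `W ↦ span {A_n W A_kᴴ}` starting from
`S_0 = span {1}`, and the unital condition `∑ A_n A_nᴴ = 1` gives `S_0 ≤ S_1`, hence (by
monotonicity of the map) an increasing chain. In a space of dimension `D²` the chain must have a
repetition `S_m = S_{m+1}` with `m ≤ D²`, after which it is constant. Injectivity makes `S_N` the
whole algebra for large `N`: every product `P` of length `N` equals `P · 1ᴴ`, and `1` is a linear
combination of such products.
-/

open Matrix Complex

/-- `S_m` : the span of all products `A_{n_1} ⋯ A_{n_m} (A_{k_m})ᴴ ⋯ (A_{k_1})ᴴ`. -/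
noncomputable def Sspan {d D : ℕ} (A : Fin d → Matrix (Fin D) (Fin D) ℂ) (m : ℕ) :
    Submodule ℂ (Matrix (Fin D) (Fin D) ℂ) :=
  Submodule.span ℂ {X | ∃ ns ks : Fin m → Fin d,
    X = (List.ofFn fun i => A (ns i)).prod * ((List.ofFn fun i => A (ks i)).prod)ᴴ}

theorem Submodule.exists_le_finrank_eq_succ {K V : Type*} [DivisionRing K] [AddCommGroup V]
    [Module K V] [FiniteDimensional K V] {f : ℕ → Submodule K V} (hf : Monotone f) :
    ∃ m ≤ Module.finrank K V, f m = f (m + 1) := by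
  by_contra! hne
  have hgrow : ∀ m ≤ Module.finrank K V + 1, m ≤ Module.finrank K (f m) := by
    intro m hm
    induction m with
    | zero => exact Nat.zero_le _
    | succ m ih =>
      have hlt : f m < f (m + 1) := lt_of_le_of_ne (hf m.le_succ) (hne m (by omega))
      have := Submodule.finrank_lt_finrank_of_lt hlt
      have := ih (by omega)
      omega
  have := hgrow _ le_rfl
  have := Submodule.finrank_le (f (Module.finrank K V + 1))
  omega

theorem Submodule.mul_star_mem_of_mem_span {R M : Type*} [CommSemiring R] [StarRing R]
    [Semiring M] [StarRing M] [Algebra R M] [StarModule R M] {W : Submodule R M} {s : Set M}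
    {x y : M} (hs : ∀ z ∈ s, x * star z ∈ W) (hy : y ∈ Submodule.span R s) :
    x * star y ∈ W := by
  induction hy using Submodule.span_induction with
  | mem z hz => exact hs z hz
  | zero => simp
  | add z w _ _ hz hw => simpa [mul_add] using W.add_mem hz hw
  | smul c z _ hz => simpa [mul_smul_comm] using W.smul_mem (star c) hz

section Sandwich

variable {R M ι : Type*} [CommSemiring R] [Semiring M] [Algebra R M] [Star M]

noncomputable def sandwichSpan (A : ι → M) (W : Submodule R M) : Submodule R M :=
  ⨆ n, ⨆ k, W.map (LinearMap.mulLeft R (A n) ∘ₗ LinearMap.mulRight R (star (A k)))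

theorem sandwichSpan_mono (A : ι → M) : Monotone (sandwichSpan (R := R) A) :=
  fun _ _ h => iSup_mono fun _ => iSup_mono fun _ => Submodule.map_mono h

end Sandwich

section Sspan

variable {d D : ℕ} (A : Fin d → Matrix (Fin D) (Fin D) ℂ)

theorem prod_mul_conjTranspose_prod_mem_Sspan {m : ℕ} (ns ks : Fin m → Fin d) :
    (List.ofFn fun i => A (ns i)).prod * ((List.ofFn fun i => A (ks i)).prod)ᴴ ∈ Sspan A m :=
  Submodule.subset_span ⟨ns, ks, rfl⟩

theorem Sspan_succ (m : ℕ) : Sspan A (m + 1) = sandwichSpan A (Sspan A m) := by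
  simp_rw [sandwichSpan, Sspan, Submodule.map_span, ← Submodule.span_iUnion]
  congr 1
  ext X
  simp only [Set.mem_iUnion, Set.mem_image, Set.mem_ofPred_eq]
  constructor
  · rintro ⟨ns, ks, rfl⟩
    refine ⟨ns 0, ks 0, _, ⟨Fin.tail ns, Fin.tail ks, rfl⟩, ?_⟩
    simp [List.ofFn_succ, conjTranspose_mul, mul_assoc, Fin.tail, star_eq_conjTranspose]
  · rintro ⟨n, k, _, ⟨ns, ks, rfl⟩, rfl⟩
    refine ⟨Fin.cons n ns, Fin.cons k ks, ?_⟩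
    simp [List.ofFn_succ, conjTranspose_mul, mul_assoc, star_eq_conjTranspose]

theorem Sspan_zero_le_one (hA : ∑ n : Fin d, A n * (A n)ᴴ = 1) : Sspan A 0 ≤ Sspan A 1 := by
  refine Submodule.span_le.2 ?_
  rintro _ ⟨_, _, rfl⟩
  simp only [List.ofFn_zero, List.prod_nil, conjTranspose_one, mul_one, SetLike.mem_coe]
  rw [← hA]
  refine Submodule.sum_mem _ fun n _ => ?_
  simpa using prod_mul_conjTranspose_prod_mem_Sspan A ![n] ![n]

theorem Sspan_monotone (hA : ∑ n : Fin d, A n * (A n)ᴴ = 1) : Monotone (Sspan A) := by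
  refine monotone_nat_of_le_succ fun m => ?_
  induction m with
  | zero => exact Sspan_zero_le_one A hA
  | succ m ih =>
    rw [Sspan_succ A m, Sspan_succ A (m + 1)]
    exact sandwichSpan_mono A ih

theorem Sspan_eq_of_le {m k : ℕ} (hm : Sspan A m = Sspan A (m + 1)) (hk : m ≤ k) :
    Sspan A k = Sspan A m := by
  induction k, hk using Nat.le_induction with
  | base => rfl
  | succ k _ ih => rw [Sspan_succ, ih, ← Sspan_succ, ← hm]

theorem Sspan_eq_top_of_span_prod_eq_top {N : ℕ}
    (hN : Submodule.span ℂ {X : Matrix (Fin D) (Fin D) ℂ |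
      ∃ ns : Fin N → Fin d, X = (List.ofFn fun i => A (ns i)).prod} = ⊤) :
    Sspan A N = ⊤ := by
  rw [eq_top_iff, ← hN]
  refine Submodule.span_le.2 ?_
  rintro _ ⟨ns, rfl⟩
  have hone : (1 : Matrix (Fin D) (Fin D) ℂ) ∈ Submodule.span ℂ _ := hN ▸ Submodule.mem_top
  suffices h : (List.ofFn fun i => A (ns i)).prod * star 1 ∈ Sspan A N by simpa using h
  refine Submodule.mul_star_mem_of_mem_span ?_ hone
  rintro _ ⟨ks, rfl⟩
  exact prod_mul_conjTranspose_prod_mem_Sspan A ns ks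

end Sspan

theorem Sspan_top_general (d D : ℕ)
    (A : Fin d → Matrix (Fin D) (Fin D) ℂ)
    (hA : ∑ n : Fin d, A n * (A n)ᴴ = 1)
    (hinj : ∃ N₀ : ℕ, ∀ N : ℕ, N₀ ≤ N →
      Submodule.span ℂ {X : Matrix (Fin D) (Fin D) ℂ |
        ∃ ns : Fin N → Fin d, X = (List.ofFn fun i => A (ns i)).prod} = ⊤) :
    Sspan A (D ^ 2) = ⊤ := by
  obtain ⟨N₀, hN₀⟩ := hinj
  obtain ⟨m, hm, hstab⟩ := Submodule.exists_le_finrank_eq_succ (Sspan_monotone A hA)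
  have hmD : m ≤ D ^ 2 := by simpa [Module.finrank_matrix, sq] using hm
  rw [Sspan_eq_of_le A hstab hmD,
    ← Sspan_eq_of_le A hstab (hmD.trans (Nat.le_add_left _ N₀))]
  exact Sspan_eq_top_of_span_prod_eq_top A (hN₀ _ (Nat.le_add_right _ _))

/-- Under the injectivity condition (for all sufficiently long blocks the
products `A_{n_1} ⋯ A_{n_N}` span the full matrix algebra), already the products
of length `D²` together with their adjoints span everything: `S_{D²} = M_D`. -/
theorem Sspan_top (d D : ℕ) (hd : 1 ≤ d) (hD : 1 ≤ D)
    (A : Fin d → Matrix (Fin D) (Fin D) ℂ)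
    (hA : ∑ n : Fin d, A n * (A n)ᴴ = 1)
    (hinj : ∃ N₀ : ℕ, ∀ N : ℕ, N₀ ≤ N →
      Submodule.span ℂ {X : Matrix (Fin D) (Fin D) ℂ |
        ∃ ns : Fin N → Fin d, X = (List.ofFn fun i => A (ns i)).prod} = ⊤) :
    Sspan A (D ^ 2) = ⊤ :=
  Sspan_top_general d D A hA hinj
end

section
/- For N ≥ 1 define the N-site reduced density matrix ρ_N of the finitely correlated state as the d^N × d^N matrix with entries ⟨n_1…n_N| ρ_N |m_1…m_N⟩ = tr((A_{m_N})ᴴ···(A_{m_1})ᴴ · Λ · A_{n_1}···A_{n_N}). Let u be a d×d unitary and suppose there exist a D×D unitary V and λ ∈ ℂ with |λ| = 1 such that ∑_m u_{n,m}·A_m = λ·V * A_n * Vᴴ for all n and such that Vᴴ * Λ * V = Λ. Then for every N ≥ 1, u^{⊗N} · ρ_N · (uᴴ)^{⊗N} = ρ_N, i.e. the state has the local symmetry u. -/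
open Matrix Complex
open scoped ComplexOrder

/-- The `N`-site reduced density matrix of the finitely correlated state:
`⟨n_1…n_N| ρ_N |m_1…m_N⟩ = tr((A_{m_N})ᴴ ⋯ (A_{m_1})ᴴ Λ A_{n_1} ⋯ A_{n_N})`. -/
noncomputable def rhoN {d D : ℕ} (A : Fin d → Matrix (Fin D) (Fin D) ℂ)
    (Λ : Matrix (Fin D) (Fin D) ℂ) (N : ℕ) :
    Matrix (Fin N → Fin d) (Fin N → Fin d) ℂ :=
  fun n m => (((List.ofFn fun i => A (m i)).prod)ᴴ * Λ *
    (List.ofFn fun i => A (n i)).prod).trace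

/-- The `N`-fold tensor (Kronecker) power `u^{⊗N}` of a `d×d` matrix. -/
noncomputable def tensorPow {d : ℕ} (u : Matrix (Fin d) (Fin d) ℂ) (N : ℕ) :
    Matrix (Fin N → Fin d) (Fin N → Fin d) ℂ :=
  fun n m => ∏ i : Fin N, u (n i) (m i)

/-!
Applying the intertwining relation letter by letter expands `u^{⊗N}` on words:
`∑_p (u^{⊗N})_{n,p} A_{p_1} ⋯ A_{p_N} = λ^N V A_{n_1} ⋯ A_{n_N} Vᴴ`.
So conjugating `ρ_N` by `u^{⊗N}` replaces both words in each trace by their `V`-conjugates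
times `λ^N`; the phases cancel since `|λ| = 1`, and the `V`'s cancel by cyclicity of the trace
and `Vᴴ Λ V = Λ`.
-/

theorem sum_prod_smul_ofFn_prod_of_intertwines {ι 𝕜 R F : Type*} [Fintype ι] [CommSemiring 𝕜]
    [Semiring R] [Algebra 𝕜 R] [FunLike F R R] [MonoidHomClass F R R]
    (A : ι → R) (u : ι → ι → 𝕜) (φ : F) (c : 𝕜)
    (h : ∀ n, ∑ m, u n m • A m = c • φ (A n)) (N : ℕ) (n : Fin N → ι) :
    ∑ p : Fin N → ι, (∏ i, u (n i) (p i)) • (List.ofFn fun i => A (p i)).prod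
      = c ^ N • φ (List.ofFn fun i => A (n i)).prod := by
  induction N with
  | zero => simp
  | succ N ih =>
    rw [← (Fin.consEquiv fun _ => ι).sum_comp, Fintype.sum_prod_type]
    simp only [Fin.consEquiv_apply, Fin.prod_univ_succ, Fin.cons_zero, Fin.cons_succ,
      List.ofFn_succ, List.prod_cons]
    simp_rw [← smul_mul_smul_comm, ← Finset.mul_sum, ← Finset.sum_mul, ih, h,
      smul_mul_smul_comm, map_mul, pow_succ']

theorem tensorPow_conjTranspose {d : ℕ} (u : Matrix (Fin d) (Fin d) ℂ) (N : ℕ) :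
    tensorPow uᴴ N = (tensorPow u N)ᴴ := by
  ext n m
  simp [tensorPow, star_prod]

theorem mul_of_trace_mul_conjTranspose {κ ι 𝕜 : Type*} [Fintype κ] [Fintype ι] [CommSemiring 𝕜]
    [StarRing 𝕜] (U : Matrix κ κ 𝕜) (P : κ → Matrix ι ι 𝕜) (Λ : Matrix ι ι 𝕜) :
    U * of (fun n m => ((P m)ᴴ * Λ * P n).trace) * Uᴴ
      = of fun n m => ((∑ q, U m q • P q)ᴴ * Λ * ∑ p, U n p • P p).trace := by
  ext n m
  simp only [conjTranspose_sum, conjTranspose_smul, Matrix.mul_sum,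
    Matrix.smul_mul, Matrix.mul_smul, trace_sum, trace_smul, mul_apply, of_apply,
    conjTranspose_apply, smul_eq_mul, Finset.sum_mul]
  refine Finset.sum_congr rfl fun p _ => Finset.sum_congr rfl fun q _ => ?_
  ring

theorem trace_conjTranspose_conj_mul_mul_conj {ι 𝕜 : Type*} [Fintype ι] [DecidableEq ι]
    [CommSemiring 𝕜] [StarRing 𝕜] {V : Matrix ι ι 𝕜} (hV : Vᴴ * V = 1) (X Λ Y : Matrix ι ι 𝕜) :
    ((V * X * Vᴴ)ᴴ * Λ * (V * Y * Vᴴ)).trace = (Xᴴ * (Vᴴ * Λ * V) * Y).trace := by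
  rw [show (V * X * Vᴴ)ᴴ * Λ * (V * Y * Vᴴ) = V * (Xᴴ * (Vᴴ * Λ * V) * Y * Vᴴ) by
      simp only [conjTranspose_mul, conjTranspose_conjTranspose, Matrix.mul_assoc],
    trace_mul_comm, Matrix.mul_assoc _ Vᴴ, hV, Matrix.mul_one]

theorem trace_conjTranspose_smul_mul_mul_smul {ι 𝕜 : Type*} [Fintype ι] [RCLike 𝕜] {c : 𝕜}
    (hc : ‖c‖ = 1) (X Λ Y : Matrix ι ι 𝕜) :
    ((c • X)ᴴ * Λ * (c • Y)).trace = (Xᴴ * Λ * Y).trace := by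
  rw [conjTranspose_smul, Matrix.smul_mul, Matrix.smul_mul, Matrix.mul_smul, smul_smul,
    trace_smul, RCLike.star_def, RCLike.conj_mul, hc]
  simp

theorem local_symmetry_of_intertwiner_general (d D : ℕ)
    (A : Fin d → Matrix (Fin D) (Fin D) ℂ)
    (Λ : Matrix (Fin D) (Fin D) ℂ)
    (u : Matrix (Fin d) (Fin d) ℂ)
    (V : Matrix (Fin D) (Fin D) ℂ) (hV : V ∈ Matrix.unitaryGroup (Fin D) ℂ)
    (lam : ℂ) (hlam : ‖lam‖ = 1)
    (hint : ∀ n : Fin d, ∑ m : Fin d, u n m • A m = lam • (V * A n * Vᴴ))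
    (hΛinv : Vᴴ * Λ * V = Λ) :
    ∀ N : ℕ, 1 ≤ N →
      tensorPow u N * rhoN A Λ N * tensorPow uᴴ N = rhoN A Λ N := by
  intro N _
  have hwords := sum_prod_smul_ofFn_prod_of_intertwines A u
    (Unitary.conjStarAlgAut ℂ _ ⟨V, hV⟩) lam (by simpa [star_eq_conjTranspose] using hint) N
  simp only [Unitary.conjStarAlgAut_apply, star_eq_conjTranspose] at hwords
  rw [tensorPow_conjTranspose]
  refine (mul_of_trace_mul_conjTranspose _ _ Λ).trans ?_
  ext n m
  simp only [of_apply, tensorPow, hwords]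
  rw [trace_conjTranspose_smul_mul_mul_smul (by rw [norm_pow, hlam, one_pow]),
    trace_conjTranspose_conj_mul_mul_conj (mem_unitaryGroup_iff'.mp hV), hΛinv]
  rfl

/-- If a unitary `V` intertwines the `A`'s (`∑_m u_{n,m} A_m = λ V A_n Vᴴ`,
`|λ| = 1`) and leaves `Λ` invariant, then `u` is a local symmetry of the state:
`u^{⊗N} ρ_N (uᴴ)^{⊗N} = ρ_N` for every `N ≥ 1`. -/
theorem local_symmetry_of_intertwiner (d D : ℕ) (hd : 1 ≤ d) (hD : 1 ≤ D)
    (A : Fin d → Matrix (Fin D) (Fin D) ℂ)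
    (hA : ∑ n : Fin d, A n * (A n)ᴴ = 1)
    (Λ : Matrix (Fin D) (Fin D) ℂ) (hΛ : Λ.PosDef) (hΛtr : Λ.trace = 1)
    (hΛfix : ∑ n : Fin d, (A n)ᴴ * Λ * A n = Λ)
    (u : Matrix (Fin d) (Fin d) ℂ) (hu : u ∈ Matrix.unitaryGroup (Fin d) ℂ)
    (V : Matrix (Fin D) (Fin D) ℂ) (hV : V ∈ Matrix.unitaryGroup (Fin D) ℂ)
    (lam : ℂ) (hlam : ‖lam‖ = 1)
    (hint : ∀ n : Fin d, ∑ m : Fin d, u n m • A m = lam • (V * A n * Vᴴ))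
    (hΛinv : Vᴴ * Λ * V = Λ) :
    ∀ N : ℕ, 1 ≤ N →
      tensorPow u N * rhoN A Λ N * tensorPow uᴴ N = rhoN A Λ N :=
  local_symmetry_of_intertwiner_general d D A Λ u V hV lam hlam hint hΛinv
end

section
/- Let V be a D×D complex unitary matrix such that the families {V * A_j * Vᴴ}_{j ∈ Fin d} and {A_j}_{j ∈ Fin d} are Kraus decompositions of the same completely positive map, i.e. ∑_j (V * A_j * Vᴴ) * X * (V * A_j * Vᴴ)ᴴ = ∑_j A_j * X * (A_j)ᴴ for every D×D matrix X. Then there exists a d×d unitary matrix u such that V * A_j * Vᴴ = ∑_n u_{n,j} · A_n for every j. -/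
/-!
Flatten each Kraus operator into a vector and stack these as the rows of a matrix `P`
(resp. `Q`). Testing the Kraus identity on the matrix units shows that the two Gram
matrices agree, `Pᴴ P = Qᴴ Q`. Hence `‖P x‖ = ‖Q x‖` for every `x`, so `P x ↦ Q x` is a
well-defined isometry on the range of `P`; extending it to a unitary `U` of the whole
space gives `Q = U P`, which row by row is the claimed relation with `u = Uᵀ`.
-/

open Matrix

theorem LinearMap.exists_linearIsometryEquiv_comp_eq_of_norm_eq {𝕜 E F : Type*} [RCLike 𝕜]
    [AddCommGroup E] [Module 𝕜 E] [NormedAddCommGroup F] [InnerProductSpace 𝕜 F]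
    [FiniteDimensional 𝕜 F] (f g : E →ₗ[𝕜] F) (h : ∀ x, ‖f x‖ = ‖g x‖) :
    ∃ U : F ≃ₗᵢ[𝕜] F, ∀ x, U (f x) = g x := by
  have hker : ker f ≤ ker g := fun x hx => by
    rw [mem_ker, ← norm_eq_zero, ← h, mem_ker.mp hx, norm_zero]
  let L : range f →ₗ[𝕜] F := (ker f).liftQ g hker ∘ₗ f.quotKerEquivRange.symm.toLinearMap
  have hL : ∀ x, L ⟨f x, mem_range_self f x⟩ = g x := fun x => by
    simp [L, quotKerEquivRange_symm_apply_image]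
  let Li : range f →ₗᵢ[𝕜] F :=
    { toLinearMap := L
      norm_map' := by rintro ⟨_, x, rfl⟩; rw [hL, ← h]; rfl }
  refine ⟨Li.extend.toLinearIsometryEquiv rfl, fun x => ?_⟩
  exact (Li.extend_apply ⟨f x, mem_range_self f x⟩).trans (hL x)

theorem Matrix.exists_mem_unitaryGroup_mul_eq_of_conjTranspose_mul_self_eq {𝕜 m n : Type*}
    [RCLike 𝕜] [Fintype m] [DecidableEq m] [Fintype n] [DecidableEq n] {P Q : Matrix m n 𝕜}
    (h : Pᴴ * P = Qᴴ * Q) : ∃ U ∈ unitaryGroup m 𝕜, U * P = Q := by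
  have hnorm : ∀ x, ‖toEuclideanLin P x‖ = ‖toEuclideanLin Q x‖ := by
    have norm_sq_eq : ∀ (R : Matrix m n 𝕜) x,
        (‖toEuclideanLin R x‖ : 𝕜) ^ 2 = inner 𝕜 x (toEuclideanLin (Rᴴ * R) x) := by
      intro R x
      rw [← inner_self_eq_norm_sq_to_K, toLpLin_mul 2 2 2, toEuclideanLin_conjTranspose_eq_adjoint]
      exact (LinearMap.adjoint_inner_right _ _ _).symm
    intro x
    have hsq := norm_sq_eq P x
    rw [h, ← norm_sq_eq Q x] at hsq
    exact (sq_eq_sq₀ (norm_nonneg _) (norm_nonneg _)).mp (by exact_mod_cast hsq)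
  obtain ⟨W, hW⟩ := (toEuclideanLin P).exists_linearIsometryEquiv_comp_eq_of_norm_eq _ hnorm
  let u := Unitary.linearIsometryEquiv.symm W
  refine ⟨(toEuclideanCLM (n := m) (𝕜 := 𝕜)).symm u, Unitary.map_mem _ u.prop, ?_⟩
  apply toEuclideanLin.injective
  ext x : 1
  rw [toLpLin_mul 2 2 2, LinearMap.comp_apply, ← hW x, ← coe_toEuclideanCLM_eq_toEuclideanLin,
    StarAlgEquiv.apply_symm_apply]
  rfl

theorem Matrix.mul_single_one_mul_conjTranspose_apply {m n α : Type*} [Fintype n] [DecidableEq n]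
    [Semiring α] [StarRing α] (M : Matrix m n α) (k l : n) (p q : m) :
    (M * single k l (1 : α) * Mᴴ) p q = M p k * star (M q l) := by
  simp [mul_apply, single, ite_and]

theorem Matrix.conjTranspose_mul_self_vec_eq_of_sum_mul_mul_conjTranspose_eq
    {ι m n 𝕜 : Type*} [Fintype ι] [Fintype n] [DecidableEq n] [CommSemiring 𝕜] [StarRing 𝕜]
    {A B : ι → Matrix m n 𝕜}
    (h : ∀ X : Matrix n n 𝕜, ∑ j, B j * X * (B j)ᴴ = ∑ j, A j * X * (A j)ᴴ) :
    (of (vec ∘ A))ᴴ * of (vec ∘ A) = (of (vec ∘ B))ᴴ * of (vec ∘ B) := by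
  ext ⟨l, q⟩ ⟨k, p⟩
  have hX := congrFun (congrFun (h (single k l 1)) p) q
  simp only [sum_apply, mul_single_one_mul_conjTranspose_apply] at hX
  simp only [mul_apply, conjTranspose_apply, of_apply, Function.comp_apply, vec]
  simp_rw [mul_comm (star _)]
  exact hX.symm

theorem Matrix.exists_mem_unitaryGroup_of_sum_mul_mul_conjTranspose_eq
    {ι m n 𝕜 : Type*} [Fintype ι] [DecidableEq ι] [Fintype m] [DecidableEq m] [Fintype n]
    [DecidableEq n] [RCLike 𝕜]
    {A B : ι → Matrix m n 𝕜}
    (h : ∀ X : Matrix n n 𝕜, ∑ j, B j * X * (B j)ᴴ = ∑ j, A j * X * (A j)ᴴ) :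
    ∃ u ∈ unitaryGroup ι 𝕜, ∀ j, B j = ∑ i, u i j • A i := by
  obtain ⟨U, hU, hUAB⟩ := exists_mem_unitaryGroup_mul_eq_of_conjTranspose_mul_self_eq
    (conjTranspose_mul_self_vec_eq_of_sum_mul_mul_conjTranspose_eq h)
  refine ⟨Uᵀ, transpose_mem_unitaryGroup_iff.mpr hU, fun j => ?_⟩
  rw [← vec_inj, vec_sum]
  funext ki
  simpa [mul_apply, vec_smul] using (congrFun (congrFun hUAB j) ki).symm

theorem kraus_decompositions_unitarily_related_general (d D : ℕ)
    (A : Fin d → Matrix (Fin D) (Fin D) ℂ)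
    (V : Matrix (Fin D) (Fin D) ℂ)
    (hsame : ∀ X : Matrix (Fin D) (Fin D) ℂ,
      ∑ j : Fin d, (V * A j * Vᴴ) * X * (V * A j * Vᴴ)ᴴ
        = ∑ j : Fin d, A j * X * (A j)ᴴ) :
    ∃ u : Matrix (Fin d) (Fin d) ℂ, u ∈ Matrix.unitaryGroup (Fin d) ℂ ∧
      ∀ j : Fin d, V * A j * Vᴴ = ∑ n : Fin d, u n j • A n :=
  exists_mem_unitaryGroup_of_sum_mul_mul_conjTranspose_eq hsame

/-- Two Kraus decompositions `{V A_j Vᴴ}` and `{A_j}` of the same completely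
positive map are related by a unitary matrix `u`: `V A_j Vᴴ = ∑_n u_{n,j} A_n`. -/
theorem kraus_decompositions_unitarily_related (d D : ℕ) (hd : 1 ≤ d) (hD : 1 ≤ D)
    (A : Fin d → Matrix (Fin D) (Fin D) ℂ)
    (V : Matrix (Fin D) (Fin D) ℂ) (hV : V ∈ Matrix.unitaryGroup (Fin D) ℂ)
    (hsame : ∀ X : Matrix (Fin D) (Fin D) ℂ,
      ∑ j : Fin d, (V * A j * Vᴴ) * X * (V * A j * Vᴴ)ᴴ
        = ∑ j : Fin d, A j * X * (A j)ᴴ) :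
    ∃ u : Matrix (Fin d) (Fin d) ℂ, u ∈ Matrix.unitaryGroup (Fin d) ℂ ∧
      ∀ j : Fin d, V * A j * Vᴴ = ∑ n : Fin d, u n j • A n :=
  kraus_decompositions_unitarily_related_general d D A V hsame
end
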